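/- The extended global score for multi-attribute explanations has sensitivity at most 1: let ℓ ≥ 1, let AC assign to each cluster label c ∈ C (with |C| ≥ 2) a set AC(c) of ℓ attributes, and let Cand(AC) = { (c, A) : c ∈ C, A ∈ AC(c) }. For nonnegative weights λ_Int, λ_Suf, λ_Div summing to 1, define GlScore_λ^ℓ(D, f, AC) = λ_Int·(1/|Cand(AC)|) Σ_{(c,A)∈Cand(AC)} Int_p(D, f, c, A) + λ_Suf·(1/|Cand(AC)|) Σ_{(c,A)∈Cand(AC)} Suf_p(D, f, c, A) + λ_Div·(1/binom(|Cand(AC)|,2)) Σ_{unordered pairs {(c,A),(c',A')}⊆Cand(AC)} d(D, f, c, c', A, A'). Then for every dataset D and tuple t, writing D' = D + {t}, |GlScore_λ^ℓ(D', f, AC) − GlScore_λ^ℓ(D, f, AC)| ≤ 1. -/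

import Mathlib

/-!
Adding a tuple `t` moves each score ingredient by at most `1`, so every average in the score
moves by at most `1` and so does their convex combination. Everything is read off count
vectors over `V`: for `Int_p` and the same-attribute diversity, `t` adds the unit vector at
`A t` to one or both count vectors and rescales the proportions, and the triangle inequality
for the half `ℓ¹` distance bounds the change by the size of that perturbation. For `Suf_p`
only the coordinate `A t` moves, from `k² / n` to `(k + e)² / (n + 1)` with `k ≤ n` and
`e ∈ {0, 1}`. A diversity term with different attributes is a minimum of cluster sizes, each
of which grows by at most one.
-/

noncomputable section

open scoped Classical

/-- The cluster of label `c`: the sub-multiset of tuples of `D` mapped to `c` by `f`. -/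
def cl {T C : Type*} [DecidableEq C] (D : Multiset T) (f : T → C) (c : C) : Multiset T :=
  D.filter (fun t => f t = c)

/-- Low-sensitivity interestingness. -/
def Intp {T V C : Type*} [Fintype V] [DecidableEq V] [DecidableEq C]
    (D : Multiset T) (f : T → C) (c : C) (A : T → V) : ℝ :=
  (1 / 2) * ∑ a : V,
    |(((cl D f c).map A).count a : ℝ) -
      ((Multiset.card (cl D f c) : ℝ) / (Multiset.card D : ℝ)) * ((D.map A).count a : ℝ)|

/-- Low-sensitivity sufficiency. -/
def Sufp {T V C : Type*} [Fintype V] [DecidableEq V] [DecidableEq C]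
    (D : Multiset T) (f : T → C) (c : C) (A : T → V) : ℝ :=
  ∑ a : V,
    if 0 < ((cl D f c).map A).count a then
      ((((cl D f c).map A).count a : ℝ)) ^ 2 / (((D.map A).count a : ℝ))
    else 0

/-- Pairwise diversity. -/
def pdiv {T V C : Type*} [Fintype V] [DecidableEq V] [DecidableEq C]
    (D : Multiset T) (f : T → C) (c c' : C) (Ac Ac' : T → V) : ℝ :=
  (min (Multiset.card (cl D f c)) (Multiset.card (cl D f c')) : ℝ) *
    (if Ac = Ac' then
      ((1 / 2) * ∑ a : V,
        |(((cl D f c).map Ac).count a : ℝ) / (max (Multiset.card (cl D f c)) 1 : ℝ) -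
          (((cl D f c').map Ac).count a : ℝ) / (max (Multiset.card (cl D f c')) 1 : ℝ)|)
      else 1)

/-- `Cand(AC) = { (c, A) : c ∈ C, A ∈ AC(c) }` for a multi-attribute combination
assigning each label a finite set of attributes. -/
def Cand {T V C : Type*} [Fintype C] (AC : C → Finset (T → V)) :
    Finset (C × (T → V)) :=
  Finset.univ.biUnion (fun c => (AC c).image (fun A => (c, A)))

/-- The extended global score for multi-attribute explanations; the sum over
unordered pairs of distinct candidates is written as half the sum over ordered
pairs of distinct candidates (legitimate since `d` is symmetric). -/
def GlScoreL {T V C : Type*} [Fintype V] [DecidableEq V] [Fintype C] [DecidableEq C]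
    (wInt wSuf wDiv : ℝ) (D : Multiset T) (f : T → C) (AC : C → Finset (T → V)) : ℝ :=
  wInt * ((1 / ((Cand AC).card : ℝ)) * ∑ p ∈ Cand AC, Intp D f p.1 p.2) +
  wSuf * ((1 / ((Cand AC).card : ℝ)) * ∑ p ∈ Cand AC, Sufp D f p.1 p.2) +
  wDiv * ((1 / (((Cand AC).card.choose 2 : ℕ) : ℝ)) *
    ((1 / 2) * ∑ p ∈ Cand AC, ∑ q ∈ Cand AC,
      if p = q then 0 else pdiv D f p.1 q.1 p.2 q.2))

section HalfL1

variable {V : Type*} [Fintype V]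

def halfL1 (x y : V → ℝ) : ℝ :=
  (1 / 2) * ∑ a, |x a - y a|

theorem halfL1_comm (x y : V → ℝ) : halfL1 x y = halfL1 y x := by
  simp only [halfL1, abs_sub_comm]

theorem abs_halfL1_sub_halfL1_le (x y x' y' : V → ℝ) :
    |halfL1 x' y' - halfL1 x y| ≤ (1 / 2) * ∑ a, |(x' a - y' a) - (x a - y a)| := by
  rw [halfL1, halfL1, ← mul_sub, ← Finset.sum_sub_distrib, abs_mul, abs_of_pos one_half_pos]
  gcongr
  exact (Finset.abs_sum_le_sum_abs _ _).trans
    (Finset.sum_le_sum fun a _ => abs_abs_sub_abs_le_abs_sub _ _)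

theorem abs_halfL1_sub_halfL1_left_le (x x' y : V → ℝ) :
    |halfL1 x' y - halfL1 x y| ≤ halfL1 x' x := by
  simpa only [halfL1, sub_sub_sub_cancel_right] using abs_halfL1_sub_halfL1_le x y x' y

theorem mul_halfL1 {r : ℝ} (hr : 0 ≤ r) (x y : V → ℝ) :
    r * halfL1 x y = halfL1 (fun a => r * x a) (fun a => r * y a) := by
  simp only [halfL1, ← mul_sub, abs_mul, abs_of_nonneg hr, ← Finset.mul_sum]
  ring

end HalfL1

section EmpiricalDistribution

variable {V : Type*} [DecidableEq V]

theorem Multiset.cast_count_cons (v a : V) (P : Multiset V) :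
    ((v ::ₘ P).count a : ℝ) = P.count a + if a = v then 1 else 0 := by
  push_cast [Multiset.count_cons]; rfl

/-- The empty multiset gets the zero vector rather than a distribution. -/
def empDist (P : Multiset V) (a : V) : ℝ :=
  P.count a / max (Multiset.card P : ℝ) 1

theorem empDist_nonneg (P : Multiset V) (a : V) : 0 ≤ empDist P a := by
  unfold empDist; positivity

theorem card_mul_empDist (P : Multiset V) (a : V) :
    Multiset.card P * empDist P a = P.count a := by
  rcases eq_or_ne P 0 with rfl | hP
  · simp
  have hS : (1 : ℝ) ≤ Multiset.card P := by exact_mod_cast Multiset.card_pos.mpr hP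
  rw [empDist, max_eq_left hS]
  field_simp

variable [Fintype V]

theorem sum_cast_count_eq_card (P : Multiset V) : ∑ a, (P.count a : ℝ) = Multiset.card P := by
  exact_mod_cast Multiset.sum_count_eq_card fun a _ => Finset.mem_univ a

theorem sum_empDist_le_one (P : Multiset V) : ∑ a, empDist P a ≤ 1 := by
  simp only [empDist]
  rw [← Finset.sum_div, sum_cast_count_eq_card, div_le_one (by positivity)]
  exact le_max_left _ _

theorem sum_abs_ite_sub_empDist_le_two (v : V) (P : Multiset V) :
    ∑ a, |(if a = v then 1 else 0) - empDist P a| ≤ 2 := by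
  calc ∑ a, |(if a = v then 1 else 0) - empDist P a|
      ≤ ∑ a, ((if a = v then 1 else 0) + empDist P a) := by
        gcongr with a
        refine (abs_sub _ _).trans_eq ?_
        rw [abs_of_nonneg (by split_ifs <;> norm_num), abs_of_nonneg (empDist_nonneg P a)]
    _ ≤ 2 := by
        rw [Finset.sum_add_distrib, Finset.sum_ite_eq', if_pos (Finset.mem_univ v)]
        linarith [sum_empDist_le_one P]

theorem half_sum_abs_mul_ite_sub_empDist_le_one {r : ℝ} (hr : |r| ≤ 1) (v : V)
    (R : Multiset V) :
    (1 / 2) * ∑ a, |r * ((if a = v then 1 else 0) - empDist R a)| ≤ 1 := by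
  simp only [abs_mul, ← Finset.mul_sum]
  nlinarith [sum_abs_ite_sub_empDist_le_two v R, abs_nonneg r,
    Finset.sum_nonneg fun a (_ : a ∈ Finset.univ) =>
      abs_nonneg ((if a = v then 1 else 0) - empDist R a)]

end EmpiricalDistribution

theorem abs_add_one_sq_div_add_one_sub_sq_div_le_one {k n : ℝ} (hk : 0 ≤ k) (hkn : k ≤ n) :
    |(k + 1) ^ 2 / (n + 1) - k ^ 2 / n| ≤ 1 := by
  rcases (hk.trans hkn).eq_or_lt with rfl | hn
  · obtain rfl := le_antisymm hkn hk
    simp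
  have key : (k + 1) ^ 2 / (n + 1) - k ^ 2 / n = (n * (2 * k + 1) - k ^ 2) / (n * (n + 1)) := by
    field_simp; ring
  rw [key, abs_of_nonneg (div_nonneg (by nlinarith) (by positivity)), div_le_one (by positivity)]
  nlinarith [sq_nonneg (n - k)]

theorem abs_sq_div_add_one_sub_sq_div_le_one {k n : ℝ} (hk : 0 ≤ k) (hkn : k ≤ n) :
    |k ^ 2 / (n + 1) - k ^ 2 / n| ≤ 1 := by
  rcases (hk.trans hkn).eq_or_lt with rfl | hn
  · obtain rfl := le_antisymm hkn hk
    simp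
  have key : k ^ 2 / (n + 1) - k ^ 2 / n = -(k ^ 2 / (n * (n + 1))) := by
    field_simp; ring
  rw [key, abs_neg, abs_of_nonneg (by positivity), div_le_one (by positivity)]
  nlinarith

section Sufficiency

variable {V : Type*} [Fintype V] [DecidableEq V]

def sufDist (P R : Multiset V) : ℝ :=
  ∑ a, (P.count a : ℝ) ^ 2 / R.count a

theorem sufDist_sub_sufDist_of_count_eq {P P' R : Multiset V} {v : V}
    (hP' : ∀ a ≠ v, P'.count a = P.count a) :
    sufDist P' (v ::ₘ R) - sufDist P R =
      (P'.count v : ℝ) ^ 2 / (R.count v + 1) - (P.count v : ℝ) ^ 2 / R.count v := by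
  rw [sufDist, sufDist, ← Finset.sum_sub_distrib,
    Finset.sum_eq_single_of_mem v (Finset.mem_univ v) fun a _ hav => ?_]
  · simp [Multiset.count_cons_self]
  · simp [hP' a hav, hav]

theorem abs_sufDist_cons_cons_sub_le {P R : Multiset V} (hPR : P ≤ R) (v : V) :
    |sufDist (v ::ₘ P) (v ::ₘ R) - sufDist P R| ≤ 1 := by
  rw [sufDist_sub_sufDist_of_count_eq fun a ha => by simp [ha],
    Multiset.count_cons_self]
  push_cast
  exact abs_add_one_sq_div_add_one_sub_sq_div_le_one (Nat.cast_nonneg _)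
    (by exact_mod_cast Multiset.count_le_of_le v hPR)

theorem abs_sufDist_cons_right_sub_le {P R : Multiset V} (hPR : P ≤ R) (v : V) :
    |sufDist P (v ::ₘ R) - sufDist P R| ≤ 1 := by
  rw [sufDist_sub_sufDist_of_count_eq fun _ _ => rfl]
  exact abs_sq_div_add_one_sub_sq_div_le_one (Nat.cast_nonneg _)
    (by exact_mod_cast Multiset.count_le_of_le v hPR)

end Sufficiency

section Interestingness

variable {V : Type*} [Fintype V] [DecidableEq V]

def intDist (P R : Multiset V) : ℝ :=
  halfL1 (fun a => (P.count a : ℝ))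
    (fun a => (Multiset.card P : ℝ) / Multiset.card R * R.count a)

theorem abs_intDist_cons_cons_sub_le {P R : Multiset V} (hPR : P ≤ R) (v : V) :
    |intDist (v ::ₘ P) (v ::ₘ R) - intDist P R| ≤ 1 := by
  rcases eq_or_ne R 0 with rfl | hR
  · obtain rfl := Multiset.le_zero.mp hPR
    simp [intDist, halfL1]
  have hN : (1 : ℝ) ≤ Multiset.card R := by exact_mod_cast Multiset.card_pos.mpr hR
  have hSN : (Multiset.card P : ℝ) ≤ Multiset.card R := by
    exact_mod_cast Multiset.card_le_card hPR
  have hr : |((Multiset.card R - Multiset.card P : ℝ) / (Multiset.card R + 1))| ≤ 1 := by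
    rw [abs_of_nonneg (div_nonneg (by linarith) (by positivity)), div_le_one (by positivity)]
    linarith [(Nat.cast_nonneg (Multiset.card P) : (0 : ℝ) ≤ _)]
  refine (abs_halfL1_sub_halfL1_le _ _ _ _).trans
    (le_of_eq_of_le ?_ (half_sum_abs_mul_ite_sub_empDist_le_one hr v R))
  congr 1
  refine Finset.sum_congr rfl fun a _ => congrArg _ ?_
  simp only [Multiset.cast_count_cons, Multiset.card_cons, empDist, max_eq_left hN]
  push_cast
  field_simp
  ring

theorem abs_intDist_cons_right_sub_le {P R : Multiset V} (hPR : P ≤ R) (v : V) :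
    |intDist P (v ::ₘ R) - intDist P R| ≤ 1 := by
  rcases eq_or_ne R 0 with rfl | hR
  · obtain rfl := Multiset.le_zero.mp hPR
    simp [intDist, halfL1]
  have hN : (1 : ℝ) ≤ Multiset.card R := by exact_mod_cast Multiset.card_pos.mpr hR
  have hSN : (Multiset.card P : ℝ) ≤ Multiset.card R := by
    exact_mod_cast Multiset.card_le_card hPR
  have hr : |-(Multiset.card P : ℝ) / (Multiset.card R + 1)| ≤ 1 := by
    rw [abs_div, abs_neg, abs_of_nonneg (by positivity), abs_of_pos (by positivity),
      div_le_one (by positivity)]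
    linarith
  refine (abs_halfL1_sub_halfL1_le _ _ _ _).trans
    (le_of_eq_of_le ?_ (half_sum_abs_mul_ite_sub_empDist_le_one hr v R))
  congr 1
  refine Finset.sum_congr rfl fun a _ => congrArg _ ?_
  simp only [Multiset.cast_count_cons, Multiset.card_cons, empDist, max_eq_left hN]
  push_cast
  field_simp
  ring

end Interestingness

section Diversity

variable {V : Type*} [Fintype V] [DecidableEq V]

def diversity (P Q : Multiset V) : ℝ :=
  min (Multiset.card P : ℝ) (Multiset.card Q) * halfL1 (empDist P) (empDist Q)

theorem diversity_comm (P Q : Multiset V) : diversity P Q = diversity Q P := by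
  rw [diversity, diversity, min_comm, halfL1_comm]

theorem halfL1_empDist_cons_le (v : V) (P : Multiset V) :
    halfL1 (empDist (v ::ₘ P)) (empDist P) ≤ 1 / (Multiset.card P + 1) := by
  rcases eq_or_ne P 0 with rfl | hP
  · simp [halfL1, empDist, Multiset.count_singleton, apply_ite (abs : ℝ → ℝ)]
    norm_num
  have hS : (1 : ℝ) ≤ Multiset.card P := by exact_mod_cast Multiset.card_pos.mpr hP
  have hdiff : ∀ a, empDist (v ::ₘ P) a - empDist P a =
      (if a = v then 1 else 0) / (Multiset.card P + 1) -
        P.count a / (Multiset.card P * (Multiset.card P + 1)) := by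
    intro a
    simp only [empDist, Multiset.cast_count_cons, Multiset.card_cons, Nat.cast_succ]
    rw [max_eq_left hS, max_eq_left (by linarith)]
    field_simp
    ring
  have hsum := sum_cast_count_eq_card P
  simp only [halfL1, hdiff]
  set S : ℝ := (Multiset.card P : ℝ)
  calc (1 / 2) * ∑ a, |(if a = v then 1 else 0) / (S + 1) - P.count a / (S * (S + 1))|
      ≤ (1 / 2) * ∑ a, ((if a = v then 1 else 0) / (S + 1) + P.count a / (S * (S + 1))) := by
        gcongr with a
        refine (abs_sub _ _).trans_eq ?_
        rw [abs_of_nonneg (div_nonneg (by split_ifs <;> norm_num) (by positivity)),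
          abs_of_nonneg (by positivity)]
    _ = 1 / (S + 1) := by
        rw [Finset.sum_add_distrib, ← Finset.sum_div, ← Finset.sum_div, Finset.sum_ite_eq',
          if_pos (Finset.mem_univ v), hsum]
        field_simp
        ring

theorem abs_diversity_cons_sub_le_of_card_le {P Q : Multiset V}
    (hQP : Multiset.card Q ≤ Multiset.card P) (v : V) :
    |diversity (v ::ₘ P) Q - diversity P Q| ≤ 1 := by
  have hQP' : (Multiset.card Q : ℝ) ≤ Multiset.card P := by exact_mod_cast hQP
  rw [diversity, diversity, Multiset.card_cons, Nat.cast_succ,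
    min_eq_right (by linarith), min_eq_right hQP', ← mul_sub, abs_mul, Nat.abs_cast]
  calc _ ≤ (Multiset.card Q : ℝ) * (1 / (Multiset.card P + 1)) := by
        gcongr
        exact (abs_halfL1_sub_halfL1_left_le _ _ _).trans (halfL1_empDist_cons_le v P)
    _ ≤ 1 := by
        rw [mul_one_div, div_le_one (by positivity)]
        linarith

theorem abs_diversity_cons_sub_le_of_card_lt {P Q : Multiset V}
    (hPQ : Multiset.card P < Multiset.card Q) (v : V) :
    |diversity (v ::ₘ P) Q - diversity P Q| ≤ 1 := by
  have hPQ' : (Multiset.card P : ℝ) + 1 ≤ Multiset.card Q := by exact_mod_cast hPQ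
  -- The minimum grows with `P` here, so both terms are compared as unnormalised count vectors.
  rw [diversity, diversity, Multiset.card_cons, Nat.cast_succ, min_eq_left hPQ',
    min_eq_left (by linarith), mul_halfL1 (by positivity), mul_halfL1 (by positivity)]
  refine (abs_halfL1_sub_halfL1_le _ _ _ _).trans
    (le_of_eq_of_le ?_ (half_sum_abs_mul_ite_sub_empDist_le_one (abs_one.le) v Q))
  congr 1
  refine Finset.sum_congr rfl fun a _ => congrArg _ ?_
  have hcons := card_mul_empDist (v ::ₘ P) a
  rw [Multiset.card_cons, Nat.cast_succ, Multiset.cast_count_cons] at hcons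
  linear_combination hcons - card_mul_empDist P a

theorem abs_diversity_cons_left_sub_le (v : V) (P Q : Multiset V) :
    |diversity (v ::ₘ P) Q - diversity P Q| ≤ 1 := by
  rcases le_or_gt (Multiset.card Q) (Multiset.card P) with h | h
  · exact abs_diversity_cons_sub_le_of_card_le h v
  · exact abs_diversity_cons_sub_le_of_card_lt h v

end Diversity

section Clusters

variable {T V C : Type*} [DecidableEq C]

theorem cl_cons_of_eq {D : Multiset T} {f : T → C} {c : C} {t : T} (h : f t = c) :
    cl (t ::ₘ D) f c = t ::ₘ cl D f c :=
  Multiset.filter_cons_of_pos _ h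

theorem cl_cons_of_ne {D : Multiset T} {f : T → C} {c : C} {t : T} (h : f t ≠ c) :
    cl (t ::ₘ D) f c = cl D f c :=
  Multiset.filter_cons_of_neg _ h

theorem map_cl_le (D : Multiset T) (f : T → C) (c : C) (A : T → V) :
    (cl D f c).map A ≤ D.map A :=
  Multiset.map_le_map (Multiset.filter_le _ _)

theorem abs_card_cl_cons_sub_le (D : Multiset T) (f : T → C) (c : C) (t : T) :
    |(Multiset.card (cl (t ::ₘ D) f c) : ℝ) - Multiset.card (cl D f c)| ≤ 1 := by
  by_cases h : f t = c
  · simp [cl_cons_of_eq h]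
  · simp [cl_cons_of_ne h]

variable [Fintype V] [DecidableEq V]

theorem Intp_eq_intDist (D : Multiset T) (f : T → C) (c : C) (A : T → V) :
    Intp D f c A = intDist ((cl D f c).map A) (D.map A) := by
  rw [intDist, Multiset.card_map, Multiset.card_map]
  rfl

-- The guard `0 < count` in `Sufp` is vacuous: a zero count contributes `0 ^ 2 / n = 0` anyway.
theorem Sufp_eq_sufDist (D : Multiset T) (f : T → C) (c : C) (A : T → V) :
    Sufp D f c A = sufDist ((cl D f c).map A) (D.map A) := by
  refine Finset.sum_congr rfl fun a _ => ?_
  split_ifs with h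
  · rfl
  · simp [Nat.eq_zero_of_not_pos h]

theorem pdiv_self_eq_diversity (D : Multiset T) (f : T → C) (c c' : C) (A : T → V) :
    pdiv D f c c' A A = diversity ((cl D f c).map A) ((cl D f c').map A) := by
  simp only [pdiv, diversity, halfL1, empDist, Multiset.card_map, if_true]

theorem pdiv_of_ne (D : Multiset T) (f : T → C) (c c' : C) {Ac Ac' : T → V} (h : Ac ≠ Ac') :
    pdiv D f c c' Ac Ac' = min (Multiset.card (cl D f c) : ℝ) (Multiset.card (cl D f c')) := by
  rw [pdiv, if_neg h, mul_one]

theorem abs_Intp_cons_sub_le (D : Multiset T) (t : T) (f : T → C) (c : C) (A : T → V) :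
    |Intp (t ::ₘ D) f c A - Intp D f c A| ≤ 1 := by
  rw [Intp_eq_intDist, Intp_eq_intDist, Multiset.map_cons]
  by_cases h : f t = c
  · rw [cl_cons_of_eq h, Multiset.map_cons]
    exact abs_intDist_cons_cons_sub_le (map_cl_le D f c A) (A t)
  · rw [cl_cons_of_ne h]
    exact abs_intDist_cons_right_sub_le (map_cl_le D f c A) (A t)

theorem abs_Sufp_cons_sub_le (D : Multiset T) (t : T) (f : T → C) (c : C) (A : T → V) :
    |Sufp (t ::ₘ D) f c A - Sufp D f c A| ≤ 1 := by
  rw [Sufp_eq_sufDist, Sufp_eq_sufDist, Multiset.map_cons]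
  by_cases h : f t = c
  · rw [cl_cons_of_eq h, Multiset.map_cons]
    exact abs_sufDist_cons_cons_sub_le (map_cl_le D f c A) (A t)
  · rw [cl_cons_of_ne h]
    exact abs_sufDist_cons_right_sub_le (map_cl_le D f c A) (A t)

theorem abs_pdiv_self_cons_sub_le (D : Multiset T) (t : T) (f : T → C) {c c' : C}
    (hcc' : c ≠ c') (A : T → V) :
    |pdiv (t ::ₘ D) f c c' A A - pdiv D f c c' A A| ≤ 1 := by
  rw [pdiv_self_eq_diversity, pdiv_self_eq_diversity]
  by_cases h : f t = c
  · rw [cl_cons_of_eq h, cl_cons_of_ne (h ▸ hcc'), Multiset.map_cons]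
    exact abs_diversity_cons_left_sub_le _ _ _
  by_cases h' : f t = c'
  · rw [cl_cons_of_ne h, cl_cons_of_eq h', Multiset.map_cons, diversity_comm,
      diversity_comm ((cl D f c).map A)]
    exact abs_diversity_cons_left_sub_le _ _ _
  · simp [cl_cons_of_ne h, cl_cons_of_ne h']

theorem abs_pdiv_cons_sub_le (D : Multiset T) (t : T) (f : T → C) {c c' : C} {Ac Ac' : T → V}
    (hne : (c, Ac) ≠ (c', Ac')) :
    |pdiv (t ::ₘ D) f c c' Ac Ac' - pdiv D f c c' Ac Ac'| ≤ 1 := by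
  by_cases hA : Ac = Ac'
  · subst hA
    exact abs_pdiv_self_cons_sub_le D t f (fun h => hne (by rw [h])) Ac
  · rw [pdiv_of_ne _ _ _ _ hA, pdiv_of_ne _ _ _ _ hA]
    exact (abs_min_sub_min_le_max _ _ _ _).trans
      (max_le (abs_card_cl_cons_sub_le D f c t) (abs_card_cl_cons_sub_le D f c' t))

end Clusters

section Averages

variable {ι : Type*}

theorem abs_one_div_mul_sum_sub_le (s : Finset ι) {m : ℝ} (hm : (s.card : ℝ) ≤ m)
    (g g' : ι → ℝ) (h : ∀ i ∈ s, |g' i - g i| ≤ 1) :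
    |1 / m * ∑ i ∈ s, g' i - 1 / m * ∑ i ∈ s, g i| ≤ 1 := by
  rcases (Nat.cast_nonneg _ |>.trans hm).eq_or_lt with rfl | hm0
  · simp
  rw [← mul_sub, ← Finset.sum_sub_distrib, abs_mul, abs_of_pos (by positivity),
    one_div_mul_eq_div, div_le_one hm0]
  calc |∑ i ∈ s, (g' i - g i)| ≤ ∑ i ∈ s, |g' i - g i| := Finset.abs_sum_le_sum_abs _ _
    _ ≤ ∑ _i ∈ s, 1 := Finset.sum_le_sum h
    _ ≤ m := by simpa using hm

theorem sum_sum_ite_eq_sum_offDiag [DecidableEq ι] (s : Finset ι) (g : ι → ι → ℝ) :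
    ∑ p ∈ s, ∑ q ∈ s, (if p = q then 0 else g p q) = ∑ x ∈ s.offDiag, g x.1 x.2 := by
  have hoff : s.offDiag = (s ×ˢ s).filter fun x => x.1 ≠ x.2 := by
    ext x
    simp [Finset.mem_offDiag, and_assoc]
  rw [hoff, Finset.sum_filter, Finset.sum_product]
  simp only [ite_not]

theorem abs_choose_two_mean_sub_le [DecidableEq ι] (s : Finset ι) (g g' : ι → ι → ℝ)
    (h : ∀ p ∈ s, ∀ q ∈ s, p ≠ q → |g' p q - g p q| ≤ 1) :
    |1 / ((s.card.choose 2 : ℕ) : ℝ) * (1 / 2 * ∑ p ∈ s, ∑ q ∈ s, if p = q then 0 else g' p q) -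
        1 / ((s.card.choose 2 : ℕ) : ℝ) * (1 / 2 * ∑ p ∈ s, ∑ q ∈ s, if p = q then 0 else g p q)|
      ≤ 1 := by
  have hcard : (s.offDiag.card : ℝ) ≤ 2 * (s.card.choose 2 : ℕ) := by
    rw [Finset.offDiag_card, Nat.cast_sub (Nat.le_mul_self _), Nat.cast_choose_two]
    push_cast
    linarith
  have hmean := abs_one_div_mul_sum_sub_le s.offDiag hcard (fun x => g x.1 x.2)
    (fun x => g' x.1 x.2) fun x hx => by
      obtain ⟨hp, hq, hpq⟩ := Finset.mem_offDiag.mp hx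
      exact h _ hp _ hq hpq
  simp only [sum_sum_ite_eq_sum_offDiag]
  convert hmean using 2
  ring

end Averages

theorem abs_weighted_sum_sub_le {w₁ w₂ w₃ x₁ x₂ x₃ y₁ y₂ y₃ : ℝ} (h₁ : 0 ≤ w₁) (h₂ : 0 ≤ w₂)
    (h₃ : 0 ≤ w₃) (hw : w₁ + w₂ + w₃ = 1) (hx₁ : |x₁ - y₁| ≤ 1) (hx₂ : |x₂ - y₂| ≤ 1)
    (hx₃ : |x₃ - y₃| ≤ 1) :
    |w₁ * x₁ + w₂ * x₂ + w₃ * x₃ - (w₁ * y₁ + w₂ * y₂ + w₃ * y₃)| ≤ 1 := by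
  rw [abs_le] at *
  constructor <;> nlinarith [hx₁.1, hx₁.2, hx₂.1, hx₂.2, hx₃.1, hx₃.2]

theorem glscore_multi_sensitivity_general {T V C : Type*} [Fintype V] [DecidableEq V]
    [Fintype C] [DecidableEq C]
    (f : T → C) (AC : C → Finset (T → V))
    (wInt wSuf wDiv : ℝ) (hInt : 0 ≤ wInt) (hSuf : 0 ≤ wSuf) (hDiv : 0 ≤ wDiv)
    (hsum : wInt + wSuf + wDiv = 1) :
    ∀ (D : Multiset T) (t : T),
      |GlScoreL wInt wSuf wDiv (t ::ₘ D) f AC - GlScoreL wInt wSuf wDiv D f AC| ≤ 1 := by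
  intro D t
  exact abs_weighted_sum_sub_le hInt hSuf hDiv hsum
    (abs_one_div_mul_sum_sub_le _ le_rfl _ _ fun p _ => abs_Intp_cons_sub_le D t f p.1 p.2)
    (abs_one_div_mul_sum_sub_le _ le_rfl _ _ fun p _ => abs_Sufp_cons_sub_le D t f p.1 p.2)
    (abs_choose_two_mean_sub_le _ _ _ fun p _ q _ hpq => abs_pdiv_cons_sub_le D t f hpq)

/-- The extended global score for multi-attribute explanations has sensitivity at
most `1`: for `ℓ ≥ 1`, `|C| ≥ 2`, `AC` assigning each label a set of `ℓ` attributes,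
and nonnegative weights summing to `1`, adding one tuple changes `GlScore_λ^ℓ` by at
most `1`. -/
theorem glscore_multi_sensitivity {T V C : Type*} [Fintype V] [DecidableEq V]
    [Fintype C] [DecidableEq C]
    (ℓ : ℕ) (hl : 1 ≤ ℓ) (hC : 2 ≤ Fintype.card C)
    (f : T → C) (AC : C → Finset (T → V)) (hAC : ∀ c : C, (AC c).card = ℓ)
    (wInt wSuf wDiv : ℝ) (hInt : 0 ≤ wInt) (hSuf : 0 ≤ wSuf) (hDiv : 0 ≤ wDiv)
    (hsum : wInt + wSuf + wDiv = 1) :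
    ∀ (D : Multiset T) (t : T),
      |GlScoreL wInt wSuf wDiv (t ::ₘ D) f AC - GlScoreL wInt wSuf wDiv D f AC| ≤ 1 :=
  glscore_multi_sensitivity_general f AC wInt wSuf wDiv hInt hSuf hDiv hsum
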